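/- The relation 2A_2 + 2(𝖣C_2)/C_2 = L^4 − 1 for local P^3 (eq. (7.8)): In ℚ[[q]] define I_{10} = 4·Σ_{d≥1} (4d−1)!/(d!)^4 q^d, I_{20} = 4·Σ_{d≥1} (4d−1)!/(d!)^4 (4Har[4d−1] − 4Har[d]) q^d with Har[m] = Σ_{k=1}^{m} 1/k, C_1 = 1 + 𝖣I_{10}, A_2 = (𝖣C_1)/C_1, C_2 = 1 + 𝖣((I_{10} + 𝖣I_{20})/C_1), where 𝖣 = q·d/dq. Then 2A_2 + 2(𝖣C_2)/C_2 = (1−256q)^{−1} − 1 in ℚ[[q]], where (1−256q)^{−1} − 1 = L^4 − 1 for L ∈ ℚ[[q]] the unique series with constant term 1 satisfying L^4(1−256q) = 1. -/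

import Mathlib

noncomputable section

/-- The derivation `𝖣 = q·d/dq` on `ℚ[[q]]`. -/
def Dq (G : PowerSeries ℚ) : PowerSeries ℚ :=
  PowerSeries.mk fun d => (d : ℚ) * PowerSeries.coeff d G

/-- Harmonic number `Har[m] = Σ_{k=1}^m 1/k`. -/
def Har (m : ℕ) : ℚ := ∑ k ∈ Finset.range m, ((k : ℚ) + 1)⁻¹

/-- `I₁₀ = 4·Σ_{d≥1} (4d−1)!/(d!)^4 q^d`. -/
def I₁₀ : PowerSeries ℚ :=
  PowerSeries.mk fun d => if d = 0 then 0 else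
    4 * ((4 * d - 1).factorial : ℚ) / ((d.factorial : ℚ)) ^ 4

/-- `I₂₀ = 4·Σ_{d≥1} (4d−1)!/(d!)^4 (4Har[4d−1] − 4Har[d]) q^d`. -/
def I₂₀ : PowerSeries ℚ :=
  PowerSeries.mk fun d => if d = 0 then 0 else
    4 * ((4 * d - 1).factorial : ℚ) / ((d.factorial : ℚ)) ^ 4
      * (4 * Har (4 * d - 1) - 4 * Har d)

/-- `C₁ = 1 + 𝖣I₁₀`. -/
def C₁ : PowerSeries ℚ := 1 + Dq I₁₀

/-- `A₂ = (𝖣C₁)/C₁`. -/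
def A₂ : PowerSeries ℚ := Dq C₁ * C₁⁻¹

/-- `C₂ = 1 + 𝖣((I₁₀ + 𝖣I₂₀)/C₁)`. -/
def C₂ : PowerSeries ℚ := 1 + Dq ((I₁₀ + Dq I₂₀) * C₁⁻¹)

/-!
The series C₁ = Σ (4d)!/(d!)⁴ q^d is annihilated by L₃ = θ³ − 4q(4θ+1)(4θ+2)(4θ+3), and
I₁₀ + 𝖣I₂₀ = Σ (4d)!/(d!)⁴ (4H_{4d} − 4H_d) q^d is the ε-derivative of its Frobenius deformation.
By Clausen's formula L₃ is the symmetric square of the hypergeometric operator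
L₂ = θ² − 256q(θ + 1/8)(θ + 3/8), so uniqueness of power-series solutions of L₃ gives C₁ = φ₀² and
I₁₀ + 𝖣I₂₀ = φ₀φ₁, where φ₀ = ₂F₁(1/8, 3/8; 1; 256q) and φ₁ is its Frobenius ε-derivative.
Then C₁C₂ = φ₀² + W(φ₀, φ₁), W the Wronskian, and this series satisfies (1 − 256q)𝖣w = 128qw.
As 2A₂ + 2𝖣C₂/C₂ is twice the logarithmic derivative of C₁C₂, it equals 256q/(1 − 256q).
-/

open PowerSeries

def eulerDerivation : Derivation ℚ ℚ⟦X⟧ ℚ⟦X⟧ := (X : ℚ⟦X⟧) • derivative ℚ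

lemma Dq_eq_eulerDerivation (f : ℚ⟦X⟧) : Dq f = eulerDerivation f := by
  ext n
  rcases n with _ | n
  · simp [Dq, eulerDerivation]
  · simp [Dq, eulerDerivation, coeff_derivative, coeff_succ_X_mul]
    ring

lemma Dq_add (f g : ℚ⟦X⟧) : Dq (f + g) = Dq f + Dq g := by
  simp only [Dq_eq_eulerDerivation, map_add]

lemma Dq_sub (f g : ℚ⟦X⟧) : Dq (f - g) = Dq f - Dq g := by
  simp only [Dq_eq_eulerDerivation, map_sub]

lemma Dq_neg (f : ℚ⟦X⟧) : Dq (-f) = -Dq f := by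
  simp only [Dq_eq_eulerDerivation, map_neg]

lemma Dq_mul (f g : ℚ⟦X⟧) : Dq (f * g) = f * Dq g + g * Dq f := by
  simp only [Dq_eq_eulerDerivation, Derivation.leibniz, smul_eq_mul]

lemma Dq_natCast (n : ℕ) : Dq (n : ℚ⟦X⟧) = 0 := by
  rw [Dq_eq_eulerDerivation, Derivation.map_natCast]

lemma Dq_ofNat (n : ℕ) [n.AtLeastTwo] : Dq (no_index (OfNat.ofNat n : ℚ⟦X⟧)) = 0 :=
  Dq_natCast n

lemma Dq_one : Dq (1 : ℚ⟦X⟧) = 0 := by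
  simpa using Dq_natCast 1

lemma Dq_zero : Dq (0 : ℚ⟦X⟧) = 0 := by
  simp [Dq_eq_eulerDerivation]

lemma Dq_X : Dq (X : ℚ⟦X⟧) = X := by
  simp [Dq_eq_eulerDerivation, eulerDerivation]

lemma coeff_Dq (f : ℚ⟦X⟧) (n : ℕ) : coeff n (Dq f) = n * coeff n f := coeff_mk _ _

lemma constantCoeff_Dq (f : ℚ⟦X⟧) : constantCoeff (Dq f) = 0 := by
  simpa using coeff_Dq f 0

lemma coeff_ofNat_mul (n : ℕ) [n.AtLeastTwo] (f : ℚ⟦X⟧) (k : ℕ) :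
    coeff k ((no_index (OfNat.ofNat n : ℚ⟦X⟧)) * f) = OfNat.ofNat n * coeff k f := by
  rw [← map_ofNat C n, coeff_C_mul]

/- `L₂ = θ² − 256q(θ + 1/8)(θ + 3/8)` and `L₃ = θ³ − 4q(4θ + 1)(4θ + 2)(4θ + 3)`, with `θ = Dq`;
the primed operators are their derivatives in `ε` after the substitution `θ ↦ θ + ε`. -/
def L₂ (f : ℚ⟦X⟧) : ℚ⟦X⟧ := (1 - 256 * X) * Dq (Dq f) - X * (128 * Dq f + 12 * f)

def L₂' (f : ℚ⟦X⟧) : ℚ⟦X⟧ := 2 * (1 - 256 * X) * Dq f - 128 * X * f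

def L₃ (f : ℚ⟦X⟧) : ℚ⟦X⟧ :=
  (1 - 256 * X) * Dq (Dq (Dq f)) - X * (384 * Dq (Dq f) + 176 * Dq f + 24 * f)

def L₃' (f : ℚ⟦X⟧) : ℚ⟦X⟧ := 3 * Dq (Dq f) - X * (768 * Dq (Dq f) + 768 * Dq f + 176 * f)

def wronskian (f g : ℚ⟦X⟧) : ℚ⟦X⟧ := f * Dq g - g * Dq f

lemma L₃_mul (f g : ℚ⟦X⟧) :
    L₃ (f * g) = f * Dq (L₂ g) + g * Dq (L₂ f) + 3 * (Dq f * L₂ g + Dq g * L₂ f) := by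
  simp only [L₃, L₂, Dq_sub, Dq_add, Dq_mul, Dq_one, Dq_X, Dq_ofNat]
  ring

lemma L₃'_mul_self (f : ℚ⟦X⟧) :
    L₃' (f * f) = f * Dq (L₂' f) + 3 * (Dq f * L₂' f) + 4 * (f * L₂ f) := by
  simp only [L₃', L₂', L₂, Dq_sub, Dq_add, Dq_mul, Dq_one, Dq_X, Dq_ofNat]
  ring

lemma Dq_sq_add_wronskian (f g : ℚ⟦X⟧) :
    (1 - 256 * X) * Dq (f * f + wronskian f g) =
      128 * X * (f * f + wronskian f g) + f * (L₂ g + L₂' f) - g * L₂ f := by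
  simp only [wronskian, L₂', L₂, Dq_sub, Dq_add, Dq_mul]
  ring

lemma coeff_succ_L₂ (f : ℚ⟦X⟧) (n : ℕ) :
    coeff (n + 1) (L₂ f) =
      (n + 1) ^ 2 * coeff (n + 1) f - 4 * (8 * n + 1) * (8 * n + 3) * coeff n f := by
  simp only [L₂, sub_mul, one_mul, mul_assoc, map_sub, coeff_succ_X_mul, map_add,
    coeff_ofNat_mul, coeff_Dq]
  push_cast
  ring

lemma coeff_succ_L₂' (f : ℚ⟦X⟧) (n : ℕ) :
    coeff (n + 1) (L₂' f) = 2 * (n + 1) * coeff (n + 1) f - 128 * (4 * n + 1) * coeff n f := by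
  simp only [L₂', mul_sub, sub_mul, mul_one, mul_assoc, map_sub, coeff_succ_X_mul,
    coeff_ofNat_mul, coeff_Dq]
  push_cast
  ring

lemma coeff_succ_L₃ (f : ℚ⟦X⟧) (n : ℕ) :
    coeff (n + 1) (L₃ f) =
      (n + 1) ^ 3 * coeff (n + 1) f - 4 * (4 * n + 1) * (4 * n + 2) * (4 * n + 3) * coeff n f := by
  simp only [L₃, sub_mul, one_mul, mul_assoc, map_sub, coeff_succ_X_mul, map_add,
    coeff_ofNat_mul, coeff_Dq]
  push_cast
  ring

lemma coeff_succ_L₃' (f : ℚ⟦X⟧) (n : ℕ) :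
    coeff (n + 1) (L₃' f) =
      3 * (n + 1) ^ 2 * coeff (n + 1) f - (768 * n ^ 2 + 768 * n + 176) * coeff n f := by
  simp only [L₃', map_sub, coeff_succ_X_mul, map_add, coeff_ofNat_mul, coeff_Dq]
  push_cast
  ring

lemma constantCoeff_L₂ (f : ℚ⟦X⟧) : constantCoeff (L₂ f) = 0 := by simp [L₂, constantCoeff_Dq]

lemma constantCoeff_L₂' (f : ℚ⟦X⟧) : constantCoeff (L₂' f) = 0 := by simp [L₂', constantCoeff_Dq]

lemma constantCoeff_L₃ (f : ℚ⟦X⟧) : constantCoeff (L₃ f) = 0 := by simp [L₃, constantCoeff_Dq]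

lemma constantCoeff_L₃' (f : ℚ⟦X⟧) : constantCoeff (L₃' f) = 0 := by simp [L₃', constantCoeff_Dq]

lemma eq_of_L₃_eq {f g : ℚ⟦X⟧} (h : L₃ f = L₃ g) (h₀ : constantCoeff f = constantCoeff g) :
    f = g := by
  ext n
  induction n with
  | zero => simpa using h₀
  | succ n ih =>
    have hn := congrArg (coeff (n + 1)) h
    rw [coeff_succ_L₃, coeff_succ_L₃, ih, sub_left_inj] at hn
    exact mul_left_cancel₀ (by positivity) hn

open Nat in
def centralMultinomial (n : ℕ) : ℚ := (4 * n)! / (n ! : ℚ) ^ 4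

lemma centralMultinomial_zero : centralMultinomial 0 = 1 := by simp [centralMultinomial]

lemma centralMultinomial_succ (n : ℕ) :
    centralMultinomial (n + 1) =
      4 * (4 * n + 1) * (4 * n + 2) * (4 * n + 3) / (n + 1) ^ 3 * centralMultinomial n := by
  have h : 4 * (n + 1) = 4 * n + 3 + 1 := by ring
  simp only [centralMultinomial, h, Nat.factorial_succ]
  push_cast
  field_simp
  ring

lemma Har_succ (n : ℕ) : Har (n + 1) = Har n + 1 / (n + 1) := by
  simp [Har, Finset.sum_range_succ]

lemma Har_four_mul_succ (n : ℕ) :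
    Har (4 * (n + 1)) =
      Har (4 * n) + 1 / (4 * n + 1) + 1 / (4 * n + 2) + 1 / (4 * n + 3) + 1 / (4 * n + 4) := by
  have h : 4 * (n + 1) = 4 * n + 3 + 1 := by ring
  simp only [h, Har_succ]
  push_cast
  ring
lemma coeff_succ_I₁₀ (n : ℕ) : coeff (n + 1) I₁₀ = centralMultinomial (n + 1) / (n + 1) := by
  have h4 : 4 * (n + 1) = 4 * n + 3 + 1 := by ring
  simp only [I₁₀, coeff_mk, Nat.add_one_ne_zero, if_false, centralMultinomial, h4,
    Nat.factorial_succ (4 * n + 3)]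
  push_cast
  field_simp
  ring

lemma coeff_succ_I₂₀ (n : ℕ) :
    coeff (n + 1) I₂₀ = coeff (n + 1) I₁₀ * (4 * Har (4 * n + 3) - 4 * Har (n + 1)) := by
  have h : 4 * (n + 1) - 1 = 4 * n + 3 := by omega
  simp only [I₁₀, I₂₀, coeff_mk, Nat.add_one_ne_zero, if_false, h]

lemma coeff_C₁ (n : ℕ) : coeff n C₁ = centralMultinomial n := by
  rcases n with _ | n
  · simp [C₁, constantCoeff_Dq, centralMultinomial_zero]
  · rw [C₁, map_add, coeff_Dq, coeff_succ_I₁₀, coeff_one, if_neg n.add_one_ne_zero]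
    push_cast
    field_simp
    ring

lemma coeff_I₁₀_add_Dq_I₂₀ (n : ℕ) :
    coeff n (I₁₀ + Dq I₂₀) = centralMultinomial n * (4 * Har (4 * n) - 4 * Har n) := by
  rcases n with _ | n
  · simp [I₁₀, constantCoeff_Dq, Har]
  · have h : 4 * (n + 1) = 4 * n + 3 + 1 := by ring
    rw [map_add, coeff_Dq, coeff_succ_I₂₀, coeff_succ_I₁₀, h, Har_succ (4 * n + 3)]
    push_cast
    field_simp
    ring

lemma L₃_C₁ : L₃ C₁ = 0 := by
  ext n
  rcases n with _ | n
  · simp [constantCoeff_L₃]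
  · rw [coeff_succ_L₃, coeff_C₁, coeff_C₁, centralMultinomial_succ, map_zero]
    field_simp
    ring

lemma L₃_I₁₀_add_Dq_I₂₀ : L₃ (I₁₀ + Dq I₂₀) = -L₃' C₁ := by
  ext n
  rcases n with _ | n
  · simp [constantCoeff_L₃, constantCoeff_L₃']
  · rw [map_neg, coeff_succ_L₃, coeff_succ_L₃', coeff_C₁, coeff_C₁, coeff_I₁₀_add_Dq_I₂₀,
      coeff_I₁₀_add_Dq_I₂₀, centralMultinomial_succ, Har_four_mul_succ, Har_succ]
    field_simp
    ring

/- `φ₀ = ₂F₁(1/8, 3/8; 1; 256q)`, and `φ₁` is the `ε`-derivative of its Frobenius deformation: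
the two recursions are `L₂ φ₀ = 0` and `L₂ φ₁ + L₂' φ₀ = 0`, read off coefficientwise. -/
def φ₀Coeff : ℕ → ℚ
  | 0 => 1
  | n + 1 => 4 * (8 * n + 1) * (8 * n + 3) / (n + 1) ^ 2 * φ₀Coeff n

def φ₁Coeff : ℕ → ℚ
  | 0 => 0
  | n + 1 => (4 * (8 * n + 1) * (8 * n + 3) * φ₁Coeff n
      - 2 * (n + 1) * φ₀Coeff (n + 1) + 128 * (4 * n + 1) * φ₀Coeff n) / (n + 1) ^ 2

def φ₀ : ℚ⟦X⟧ := mk φ₀Coeff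

def φ₁ : ℚ⟦X⟧ := mk φ₁Coeff

lemma constantCoeff_φ₀ : constantCoeff φ₀ = 1 := by simp [φ₀, φ₀Coeff]

lemma constantCoeff_φ₁ : constantCoeff φ₁ = 0 := by simp [φ₁, φ₁Coeff]

lemma L₂_φ₀ : L₂ φ₀ = 0 := by
  ext n
  rcases n with _ | n
  · simp [constantCoeff_L₂]
  · rw [coeff_succ_L₂, φ₀, coeff_mk, coeff_mk, φ₀Coeff, map_zero]
    field_simp
    ring

lemma L₂_φ₁ : L₂ φ₁ = -L₂' φ₀ := by
  ext n
  rcases n with _ | n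
  · simp [constantCoeff_L₂, constantCoeff_L₂']
  · rw [map_neg, coeff_succ_L₂, coeff_succ_L₂', φ₀, φ₁, coeff_mk, coeff_mk, coeff_mk, coeff_mk,
      φ₁Coeff]
    field_simp
    ring

lemma C₁_eq_φ₀_mul_φ₀ : C₁ = φ₀ * φ₀ := by
  refine eq_of_L₃_eq ?_ ?_
  · rw [L₃_C₁, L₃_mul, L₂_φ₀, Dq_zero]
    ring
  · rw [← coeff_zero_eq_constantCoeff_apply, coeff_C₁, centralMultinomial_zero, map_mul,
      constantCoeff_φ₀, mul_one]

lemma I₁₀_add_Dq_I₂₀_eq_φ₀_mul_φ₁ : I₁₀ + Dq I₂₀ = φ₀ * φ₁ := by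
  refine eq_of_L₃_eq ?_ ?_
  · rw [L₃_I₁₀_add_Dq_I₂₀, C₁_eq_φ₀_mul_φ₀, L₃'_mul_self, L₃_mul, L₂_φ₀, L₂_φ₁, Dq_neg, Dq_zero]
    ring
  · rw [← coeff_zero_eq_constantCoeff_apply, coeff_I₁₀_add_Dq_I₂₀, map_mul, constantCoeff_φ₁]
    simp [Har]

lemma wronskian_eq_mul_Dq_mul_inv {f : ℚ⟦X⟧} (hf : constantCoeff f ≠ 0) (g : ℚ⟦X⟧) :
    wronskian f g = f * f * Dq (g * f⁻¹) := by
  have hg : g = g * f⁻¹ * f := by rw [mul_assoc, PowerSeries.inv_mul_cancel f hf, mul_one]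
  rw [wronskian]
  nth_rewrite 1 [hg]
  nth_rewrite 2 [hg]
  rw [Dq_mul]
  ring

lemma C₁_mul_C₂ : C₁ * C₂ = φ₀ * φ₀ + wronskian φ₀ φ₁ := by
  have h₀ : constantCoeff φ₀ ≠ 0 := by simp [constantCoeff_φ₀]
  have hφ : φ₀ * φ₁ * (φ₀ * φ₀)⁻¹ = φ₁ * φ₀⁻¹ := by
    rw [PowerSeries.mul_inv_rev]
    linear_combination (φ₁ * φ₀⁻¹) * PowerSeries.mul_inv_cancel φ₀ h₀
  rw [C₂, I₁₀_add_Dq_I₂₀_eq_φ₀_mul_φ₁, C₁_eq_φ₀_mul_φ₀, hφ, wronskian_eq_mul_Dq_mul_inv h₀]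
  ring

lemma Dq_C₁_mul_C₂ : (1 - 256 * X) * Dq (C₁ * C₂) = 128 * X * (C₁ * C₂) := by
  rw [C₁_mul_C₂, Dq_sq_add_wronskian, L₂_φ₀, L₂_φ₁]
  ring

lemma Dq_mul_mul_inv {f g : ℚ⟦X⟧} (hf : constantCoeff f ≠ 0) (hg : constantCoeff g ≠ 0) :
    Dq (f * g) * (f * g)⁻¹ = Dq f * f⁻¹ + Dq g * g⁻¹ := by
  rw [Dq_mul, PowerSeries.mul_inv_rev]
  linear_combination (Dq g * g⁻¹) * PowerSeries.mul_inv_cancel f hf +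
    (Dq f * f⁻¹) * PowerSeries.mul_inv_cancel g hg

lemma two_mul_Dq_mul_inv_eq_inv_sub_one {w : ℚ⟦X⟧} (hw : constantCoeff w ≠ 0)
    (h : (1 - 256 * X) * Dq w = 128 * X * w) :
    2 * Dq w * w⁻¹ = (1 - 256 * X)⁻¹ - 1 := by
  have hΔ : constantCoeff (1 - 256 * X : ℚ⟦X⟧) ≠ 0 := by simp
  linear_combination (2 * w⁻¹ * (1 - 256 * X)⁻¹) * h
    - (2 * Dq w * w⁻¹ + 1) * PowerSeries.mul_inv_cancel _ hΔ
    + (256 * X * (1 - 256 * X)⁻¹) * PowerSeries.mul_inv_cancel w hw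

theorem stmt11 :
    2 * A₂ + 2 * Dq C₂ * C₂⁻¹ = (1 - 256 * PowerSeries.X)⁻¹ - 1 := by
  have hC₁ : constantCoeff C₁ ≠ 0 := by
    rw [← coeff_zero_eq_constantCoeff_apply, coeff_C₁, centralMultinomial_zero]
    exact one_ne_zero
  have hC₂ : constantCoeff C₂ ≠ 0 := by simp [C₂, constantCoeff_Dq]
  calc 2 * A₂ + 2 * Dq C₂ * C₂⁻¹ = 2 * Dq (C₁ * C₂) * (C₁ * C₂)⁻¹ := by
        rw [A₂, mul_assoc 2 (Dq (C₁ * C₂)), Dq_mul_mul_inv hC₁ hC₂]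
        ring
    _ = (1 - 256 * X)⁻¹ - 1 :=
        two_mul_Dq_mul_inv_eq_inv_sub_one (by simpa using mul_ne_zero hC₁ hC₂) Dq_C₁_mul_C₂

end
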